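/- Upper bound on the probability of a belief update under the straightforward policy: there exists a universal constant C_update > 0 such that in the per-round straightforward-policy model, whenever w = u - l ≤ C_update, the probability that the interval is updated satisfies P[(l', u') ≠ (l, u)] ≤ exp(-C_update / w). -/

import Mathlib

open MeasureTheory ProbabilityTheory Set

noncomputable section

/-- Standard normal density. -/
def stdPdf (z : ℝ) : ℝ := Real.exp (-z ^ 2 / 2) / Real.sqrt (2 * Real.pi)

/-- Standard normal cdf. -/
def stdCdf (c : ℝ) : ℝ := ∫ z in Set.Iio c, stdPdf z

/-- Mean of a standard normal truncated to `(c, ∞)`. -/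
def truncMeanAbove (c : ℝ) : ℝ :=
  (∫ z in Set.Ioi c, z * stdPdf z) / (∫ z in Set.Ioi c, stdPdf z)

/-- Mean of a standard normal truncated to `(-∞, c)`. -/
def truncMeanBelow (c : ℝ) : ℝ :=
  (∫ z in Set.Iio c, z * stdPdf z) / (∫ z in Set.Iio c, stdPdf z)

/-- Mean of a standard normal truncated to `(a, b)`. -/
def truncMeanBetween (a b : ℝ) : ℝ :=
  (∫ z in Set.Ioo a b, z * stdPdf z) / (∫ z in Set.Ioo a b, stdPdf z)

/-- Signum, with the (measure-zero) value at `0` set to `-1`. -/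
def sgn (x : ℝ) : ℝ := if 0 < x then 1 else -1

/-- The standard normal measure on `ℝ`. -/
def stdNormal : Measure ℝ := gaussianReal 0 1

/-- The joint law of two independent standard normals. -/
def stdNormal2 : Measure (ℝ × ℝ) := stdNormal.prod stdNormal

/-- Uniform measure on `[-1, 1]` (the prior on the state θ). -/
def uniformState : Measure ℝ := (2 : ENNReal)⁻¹ • volume.restrict (Set.Icc (-1 : ℝ) 1)

instance : IsProbabilityMeasure stdNormal := by unfold stdNormal; infer_instance
instance : IsProbabilityMeasure stdNormal2 := by unfold stdNormal2; infer_instance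
/-- Recommender's message under the straightforward policy. -/
def aSt (m x z : ℝ) : ℝ := if 0 < x * m + z then 1 else -1

/-- User's posterior mean of the dynamic payoff under the straightforward policy. -/
def ZSt (m x z : ℝ) : ℝ :=
  if 0 < x * m + z then truncMeanAbove (-(x * m)) else truncMeanBelow (-(x * m))

/-- User's action under the straightforward policy. -/
def bSt (θ m x z : ℝ) : ℝ := if 0 < x * θ + ZSt m x z then 1 else -1

/-- The superior arm. -/
def bStar (θ x z : ℝ) : ℝ := if 0 < x * θ + z then 1 else -1

/-- Per-round regret under the straightforward policy. -/
def regSt (θ m x z : ℝ) : ℝ := if bSt θ m x z = bStar θ x z then 0 else |x * θ + z|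

/-- One-step update of the confidence interval under the straightforward policy. -/
def updSt (θ l u x z : ℝ) : ℝ × ℝ :=
  if bSt θ ((l + u) / 2) x z * sgn x < 0 then
    (l, min u (-(ZSt ((l + u) / 2) x z / x)))
  else
    (max l (-(ZSt ((l + u) / 2) x z / x)), u)


section AuxLemmas
open Real

lemma stdPdf_eq (z : ℝ) : stdPdf z = gaussianPDFReal 0 1 z := by
  simp [stdPdf, gaussianPDFReal, div_eq_inv_mul]

lemma integrable_stdPdf : Integrable stdPdf := by
  simp only [funext stdPdf_eq]; exact integrable_gaussianPDFReal 0 1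

lemma integrable_mul_stdPdf : Integrable (fun z => z * stdPdf z) := by
  have h : Integrable (fun z : ℝ => z * Real.exp (-(1/2 : ℝ) * z ^ 2)) :=
    integrable_mul_exp_neg_mul_sq (by norm_num)
  have := h.div_const (Real.sqrt (2 * Real.pi))
  convert this using 1
  funext z; unfold stdPdf; rw [mul_div_assoc]; ring_nf

lemma stdPdf_pos (z : ℝ) : 0 < stdPdf z := by unfold stdPdf; positivity

lemma stdPdf_even (z : ℝ) : stdPdf (-z) = stdPdf z := by unfold stdPdf; rw [neg_sq]

lemma stdPdf_anti {a b : ℝ} (ha : 0 ≤ a) (hab : a ≤ b) : stdPdf b ≤ stdPdf a := by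
  unfold stdPdf
  have : Real.exp (-b^2/2) ≤ Real.exp (-a^2/2) := Real.exp_le_exp.mpr (by nlinarith)
  gcongr


lemma integral_stdPdf : ∫ z, stdPdf z = 1 := by
  unfold stdPdf
  rw [integral_div]
  rw [show (fun z : ℝ => Real.exp (-z ^ 2 / 2)) = fun z : ℝ => Real.exp (-(1/2 : ℝ) * z ^ 2) by
    funext z; ring_nf]
  rw [integral_gaussian]
  rw [div_eq_one_iff_eq (by positivity)]
  rw [show Real.pi / (1/2 : ℝ) = 2 * Real.pi by ring]

lemma Q_pos (c : ℝ) : 0 < ∫ z in Ioi c, stdPdf z := by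
  have h := integrable_stdPdf.integrableOn (s := Ioi c)
  rw [setIntegral_pos_iff_support_of_nonneg_ae (ae_of_all _ fun z => (stdPdf_pos z).le) h]
  have : (Function.support stdPdf) = univ := by
    ext z; simp [Function.mem_support, (stdPdf_pos z).ne']
  rw [this, univ_inter]
  simp [Real.volume_Ioi]

lemma Q_le_one (c : ℝ) : (∫ z in Ioi c, stdPdf z) ≤ 1 := by
  rw [← integral_stdPdf]
  exact setIntegral_le_integral integrable_stdPdf (ae_of_all _ fun z => (stdPdf_pos z).le)

lemma sqrt_two_pi_lt : Real.sqrt (2 * Real.pi) < 2.51 := by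
  rw [show (2.51 : ℝ) = Real.sqrt (2.51 ^ 2) by rw [Real.sqrt_sq]; norm_num]
  apply Real.sqrt_lt_sqrt (by positivity)
  nlinarith [Real.pi_lt_d2]

lemma two_le_sqrt_two_pi : (2 : ℝ) ≤ Real.sqrt (2 * Real.pi) := by
  rw [Real.le_sqrt (by norm_num) (by positivity)]
  nlinarith [Real.pi_gt_three]

lemma stdPdf_two_ge : (1:ℝ)/40 ≤ stdPdf 2 := by
  unfold stdPdf
  rw [le_div_iff₀ (by positivity)]
  have he : Real.exp (-(2:ℝ)^2/2) = (Real.exp 1)⁻¹ ^ 2 := by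
    rw [← Real.exp_neg, ← Real.exp_nat_mul]; norm_num
  rw [he]
  have h1 := Real.exp_one_gt_d9
  have h2 := Real.exp_one_lt_d9
  have hp : (0:ℝ) < Real.exp 1 := Real.exp_pos 1
  have hinv2 : (1/2.7182818286 : ℝ) ≤ (Real.exp 1)⁻¹ := by
    rw [le_inv_comm₀ (by norm_num) hp]
    calc Real.exp 1 ≤ 2.7182818286 := h2.le
    _ = (1/2.7182818286 : ℝ)⁻¹ := by norm_num
  nlinarith [sqrt_two_pi_lt, Real.sqrt_nonneg (2*Real.pi)]
lemma integrable_sub_mul_stdPdf (c : ℝ) : Integrable (fun z => (z - c) * stdPdf z) := by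
  have := integrable_mul_stdPdf.sub (integrable_stdPdf.const_mul c)
  convert this using 1
  funext z; simp only [Pi.sub_apply]; ring

lemma exp_neg_three_half : (1:ℝ)/5 ≤ Real.exp (-(3/2)) := by
  rw [Real.exp_neg]
  have hp : (0:ℝ) < Real.exp (3/2) := Real.exp_pos _
  have h5 : Real.exp (3/2) ≤ 5 := by
    have hsq : Real.exp (3/2) ^ 2 = Real.exp 3 := by
      rw [← Real.exp_nat_mul]
      · norm_num
    have h3 : Real.exp 3 ≤ 25 := by
      have he : Real.exp 3 = Real.exp 1 ^ 3 := by
        rw [← Real.exp_nat_mul]; norm_num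
      have hp3 := pow_le_pow_left₀ (Real.exp_pos 1).le Real.exp_one_lt_d9.le 3
      rw [he]
      nlinarith [hp3]
    nlinarith
  rw [le_inv_comm₀ (by norm_num) hp]
  linarith

lemma key_above (c : ℝ) : 1 / (20 * (|c| + 2)) ≤ truncMeanAbove c - c := by
  have hQ : 0 < ∫ z in Ioi c, stdPdf z := Q_pos c
  have habs : (0:ℝ) < |c| + 2 := by positivity
  have hN_eq : ∫ z in Ioi c, (z - c) * stdPdf z
      = (∫ z in Ioi c, z * stdPdf z) - c * ∫ z in Ioi c, stdPdf z := by
    simp_rw [sub_mul]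
    rw [integral_sub integrable_mul_stdPdf.integrableOn
      ((integrable_stdPdf.const_mul c).integrableOn), integral_const_mul]
  have hgoal : truncMeanAbove c - c = (∫ z in Ioi c, (z - c) * stdPdf z) / ∫ z in Ioi c, stdPdf z := by
    rw [hN_eq]; unfold truncMeanAbove; field_simp
  rw [hgoal, le_div_iff₀ hQ]
  rcases le_or_gt c 0 with hc | hc
  · -- c ≤ 0 case
    have hbound : 1 / (20 * (|c| + 2)) * ∫ z in Ioi c, stdPdf z ≤ 1/40 := by
      have h1 : 1 / (20 * (|c| + 2)) ≤ 1/40 := by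
        apply div_le_div_of_nonneg_left (by norm_num) (by norm_num)
        nlinarith [abs_nonneg c]
      nlinarith [Q_le_one c, hQ]
    have hsub : Ioo (1:ℝ) 2 ⊆ Ioi c := fun z hz => lt_trans (by linarith : c < 1) hz.1
    have hN : 1/40 ≤ ∫ z in Ioi c, (z - c) * stdPdf z := by
      calc (1:ℝ)/40 ≤ stdPdf 2 := stdPdf_two_ge
      _ = ∫ _z in Ioo (1:ℝ) 2, stdPdf 2 := by
          rw [setIntegral_const, Real.volume_real_Ioo]
          norm_num
      _ ≤ ∫ z in Ioo (1:ℝ) 2, (z - c) * stdPdf z := by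
          apply setIntegral_mono_on (integrableOn_const (by simp [Real.volume_Ioo]))
            (integrable_sub_mul_stdPdf c).integrableOn measurableSet_Ioo
          intro z hz
          have h2 : stdPdf 2 ≤ stdPdf z := stdPdf_anti (by linarith [hz.1]) hz.2.le
          have h3 : 1 ≤ z - c := by linarith [hz.1]
          nlinarith [stdPdf_pos z]
      _ ≤ ∫ z in Ioi c, (z - c) * stdPdf z := by
          apply setIntegral_mono_set (integrable_sub_mul_stdPdf c).integrableOn
          · exact (ae_restrict_iff' measurableSet_Ioi).mpr (ae_of_all _ fun z hz =>
              mul_nonneg (by simp only [mem_Ioi] at hz; linarith) (stdPdf_pos z).le)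
          · exact hsub.eventuallyLE
    linarith
  · -- 0 < c case
    set s : ℝ := 1/(c+1) with hs_def
    set δ : ℝ := 1/(10*(c+1)) with hδ_def
    have hc1 : (0:ℝ) < c + 1 := by linarith
    have hs : 0 < s := by positivity
    have hδ : 0 < δ := by positivity
    have hs1 : s ≤ 1 := by rw [hs_def, div_le_one hc1]; linarith
    have hcs : c * s ≤ 1 := by
      rw [hs_def, mul_one_div, div_le_one hc1]; linarith
    have hδs : δ = s / 10 := by rw [hs_def, hδ_def]; field_simp
    -- (i) pointwise lower bound on stdPdf (c+s)
    have hpdf : stdPdf c / 5 ≤ stdPdf (c + s) := by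
      unfold stdPdf
      have hexp : Real.exp (-c^2/2) * Real.exp (-(3/2)) ≤ Real.exp (-(c+s)^2/2) := by
        rw [← Real.exp_add]
        apply Real.exp_le_exp.mpr
        nlinarith
      have h5 : Real.exp (-c^2/2) / 5 ≤ Real.exp (-c^2/2) * Real.exp (-(3/2)) := by
        have := exp_neg_three_half
        have he := Real.exp_pos (-c^2/2)
        rw [div_eq_mul_inv]
        nlinarith
      rw [div_div, div_le_div_iff₀ (by positivity) (by positivity)]
      nlinarith [Real.exp_pos (-c^2/2), Real.exp_pos (-(c+s)^2/2),
        Real.sqrt_nonneg (2*Real.pi), exp_neg_three_half]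
    -- (ii) lower bound on Q
    have hQlow : s * (stdPdf c / 5) ≤ ∫ z in Ioi c, stdPdf z := by
      calc s * (stdPdf c / 5) ≤ s * stdPdf (c + s) := by nlinarith
      _ = ∫ _z in Ioo c (c+s), stdPdf (c+s) := by
          rw [setIntegral_const, Real.volume_real_Ioo, smul_eq_mul]
          rw [show c + s - c = s by ring, max_eq_left hs.le]
      _ ≤ ∫ z in Ioo c (c+s), stdPdf z := by
          apply setIntegral_mono_on (integrableOn_const (by simp [Real.volume_Ioo]))
            integrable_stdPdf.integrableOn measurableSet_Ioo
          intro z hz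
          exact stdPdf_anti (by linarith [hz.1]) hz.2.le
      _ ≤ ∫ z in Ioi c, stdPdf z := by
          apply setIntegral_mono_set integrable_stdPdf.integrableOn
            (ae_of_all _ fun z => (stdPdf_pos z).le)
            (Ioo_subset_Ioi_self.eventuallyLE)
    -- (iii) split Q
    have hsplit : (∫ z in Ioi c, stdPdf z)
        = (∫ z in Ioc c (c+δ), stdPdf z) + ∫ z in Ioi (c+δ), stdPdf z := by
      rw [← setIntegral_union (Ioc_disjoint_Ioi le_rfl) measurableSet_Ioi
        integrable_stdPdf.integrableOn integrable_stdPdf.integrableOn,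
        Ioc_union_Ioi_eq_Ioi (by linarith)]
    have hIoc : (∫ z in Ioc c (c+δ), stdPdf z) ≤ δ * stdPdf c := by
      calc (∫ z in Ioc c (c+δ), stdPdf z) ≤ ∫ _z in Ioc c (c+δ), stdPdf c := by
            apply setIntegral_mono_on integrable_stdPdf.integrableOn
              (integrableOn_const (by simp [Real.volume_Ioc]))
              measurableSet_Ioc
            intro z hz
            exact stdPdf_anti hc.le hz.1.le
      _ = δ * stdPdf c := by
          rw [setIntegral_const, Real.volume_real_Ioc, smul_eq_mul]
          rw [show c + δ - c = δ by ring, max_eq_left hδ.le]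
    have hQ2 : (∫ z in Ioi c, stdPdf z) / 2 ≤ ∫ z in Ioi (c+δ), stdPdf z := by
      have hhalf : δ * stdPdf c ≤ (∫ z in Ioi c, stdPdf z) / 2 := by
        rw [hδs]
        linarith [hQlow]
      linarith [hsplit, hIoc]
    -- (v) lower bound on N
    have hNlow : δ * ((∫ z in Ioi c, stdPdf z) / 2) ≤ ∫ z in Ioi c, (z - c) * stdPdf z := by
      calc δ * ((∫ z in Ioi c, stdPdf z) / 2) ≤ δ * ∫ z in Ioi (c+δ), stdPdf z :=
            mul_le_mul_of_nonneg_left hQ2 hδ.le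
      _ = ∫ z in Ioi (c+δ), δ * stdPdf z := (integral_const_mul _ _).symm
      _ ≤ ∫ z in Ioi (c+δ), (z - c) * stdPdf z := by
          apply setIntegral_mono_on (integrable_stdPdf.const_mul δ).integrableOn
            (integrable_sub_mul_stdPdf c).integrableOn measurableSet_Ioi
          intro z hz
          simp only [mem_Ioi] at hz
          have := stdPdf_pos z
          nlinarith
      _ ≤ ∫ z in Ioi c, (z - c) * stdPdf z := by
          apply setIntegral_mono_set (integrable_sub_mul_stdPdf c).integrableOn
          · exact (ae_restrict_iff' measurableSet_Ioi).mpr (ae_of_all _ fun z hz =>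
              mul_nonneg (by simp only [mem_Ioi] at hz; linarith) (stdPdf_pos z).le)
          · exact (Ioi_subset_Ioi (by linarith)).eventuallyLE
    have habsc : |c| = c := abs_of_pos hc
    have hfinal : 1 / (20 * (|c| + 2)) ≤ δ / 2 := by
      have hd2 : δ / 2 = 1 / (20*(c+1)) := by rw [hδ_def]; field_simp; ring
      rw [habsc, hd2]
      apply div_le_div_of_nonneg_left (by norm_num) (by positivity)
      nlinarith
    calc 1 / (20 * (|c| + 2)) * ∫ z in Ioi c, stdPdf z
        ≤ δ / 2 * ∫ z in Ioi c, stdPdf z := mul_le_mul_of_nonneg_right hfinal hQ.le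
      _ = δ * ((∫ z in Ioi c, stdPdf z) / 2) := by ring
      _ ≤ ∫ z in Ioi c, (z - c) * stdPdf z := hNlow

lemma below_eq (d : ℝ) : truncMeanBelow d = - truncMeanAbove (-d) := by
  have h1 : ∫ z in Iio d, stdPdf z = ∫ z in Ioi (-d), stdPdf z := by
    have h := integral_comp_neg_Ioi (-d) stdPdf
    rw [neg_neg] at h
    rw [← integral_Iic_eq_integral_Iio, ← h]
    simp_rw [stdPdf_even]
  have h2 : ∫ z in Iio d, z * stdPdf z = - ∫ z in Ioi (-d), z * stdPdf z := by
    have h := integral_comp_neg_Ioi (-d) (fun x => x * stdPdf x)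
    rw [neg_neg] at h
    rw [← integral_Iic_eq_integral_Iio, ← h, ← integral_neg]
    congr 1
    funext z
    rw [stdPdf_even]
    ring
  unfold truncMeanBelow truncMeanAbove
  rw [h1, h2, neg_div]

/-- if the interval updates and x ≠ 0 then w * |x| * (|x|+2) ≥ 1/10 -/
lemma update_imp (θ l u x z : ℝ) (hx : x ≠ 0) (hl : -1 ≤ l) (hu : u ≤ 1)
    (hθ₁ : l ≤ θ) (hθ₂ : θ ≤ u) (hupd : updSt θ l u x z ≠ (l, u)) :
    1/10 ≤ (u - l) * (|x| * (|x| + 2)) := by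
  set m : ℝ := (l + u) / 2 with hm_def
  set Z : ℝ := ZSt m x z with hZ_def
  set t : ℝ := -(Z / x) with ht_def
  have ht : t = (-Z) / x := by rw [ht_def, neg_div]
  clear_value t Z m
  have hlu : l ≤ u := le_trans hθ₁ hθ₂
  have hm1 : |x * m| ≤ |x| := by
    rw [abs_mul]
    have : |m| ≤ 1 := by rw [abs_le, hm_def]; constructor <;> linarith
    nlinarith [abs_nonneg x]
  -- step 1 : l ≤ t ≤ u
  have step1 : l ≤ t ∧ t ≤ u := by
    unfold updSt at hupd
    rw [← hm_def, ← hZ_def, ← ht_def] at hupd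
    split_ifs at hupd with hbr
    · -- branch 1 : u' = min u t ≠ u, so t < u ; and θ ≤ t
      have hne : min u t ≠ u := fun h => hupd (by rw [h])
      have htu : t ≤ u := by
        by_contra hcon
        exact hne (min_eq_left (le_of_not_ge hcon))
      refine ⟨le_trans hθ₁ ?_, htu⟩
      rcases hx.lt_or_gt with hxn | hxp
      · -- x < 0 : sgn x = -1, bSt > 0 means bSt = 1 means 0 < xθ + Z
        have hsgn : sgn x = -1 := if_neg (not_lt.mpr hxn.le)
        rw [hsgn] at hbr
        have hb1 : 0 < x * θ + Z := by
          by_contra hcon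
          have : bSt θ m x z = -1 := if_neg (by rw [← hZ_def]; exact hcon)
          rw [this] at hbr; norm_num at hbr
        rw [ht, le_div_iff_of_neg hxn]
        linarith
      · -- x > 0 : sgn x = 1, bSt < 0 means bSt = -1 means ¬(0 < xθ + Z)
        have hsgn : sgn x = 1 := if_pos hxp
        rw [hsgn, mul_one] at hbr
        have hb1 : ¬ (0 < x * θ + Z) := by
          intro hcon
          have : bSt θ m x z = 1 := if_pos (by rw [← hZ_def]; exact hcon)
          rw [this] at hbr; norm_num at hbr
        rw [ht, le_div_iff₀ hxp]
        push_neg at hb1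
        linarith
    · -- branch 2 : l' = max l t ≠ l, so l < t ; and t ≤ θ
      have hne : max l t ≠ l := fun h => hupd (by rw [h])
      have hlt : l ≤ t := by
        by_contra hcon
        exact hne (max_eq_left (le_of_not_ge hcon))
      refine ⟨hlt, le_trans ?_ hθ₂⟩
      push_neg at hbr
      rcases hx.lt_or_gt with hxn | hxp
      · -- x < 0 : sgn x = -1, bSt * (-1) ≥ 0 means bSt = -1 means ¬(0 < xθ + Z)
        have hsgn : sgn x = -1 := if_neg (not_lt.mpr hxn.le)
        rw [hsgn] at hbr
        have hb1 : ¬ (0 < x * θ + Z) := by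
          intro hcon
          have : bSt θ m x z = 1 := if_pos (by rw [← hZ_def]; exact hcon)
          rw [this] at hbr; norm_num at hbr
        push_neg at hb1
        rw [ht, div_le_iff_of_neg hxn]
        linarith
      · -- x > 0 : bSt ≥ 0 means bSt = 1 means 0 < xθ + Z
        have hsgn : sgn x = 1 := if_pos hxp
        rw [hsgn, mul_one] at hbr
        have hb1 : 0 < x * θ + Z := by
          by_contra hcon
          have : bSt θ m x z = -1 := if_neg (by rw [← hZ_def]; exact hcon)
          rw [this] at hbr; norm_num at hbr
        rw [ht, div_le_iff₀ hxp]
        linarith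
  -- step 2 : |Z + m * x| ≤ (u - l)/2 * |x|
  have hxt : x * t = -Z := by
    rw [ht, mul_div_cancel₀ _ hx]
  obtain ⟨hs1, hs2⟩ := step1
  have step2 : |Z + m * x| ≤ (u - l)/2 * |x| := by
    have htm : |t - m| ≤ (u - l)/2 := by
      rw [abs_le, hm_def]
      constructor <;> linarith
    have hZmx : Z + m * x = (-x) * (t - m) := by
      have : -x * t = Z := by rw [neg_mul, hxt, neg_neg]
      nlinarith [this]
    rw [hZmx, abs_mul, abs_neg]
    rw [mul_comm]
    exact mul_le_mul_of_nonneg_right htm (abs_nonneg x)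
  -- step 3 : 1/(20*(|x|+2)) ≤ |Z + m*x|
  have step3 : 1/(20*(|x|+2)) ≤ |Z + m * x| := by
    have hmono : 1/(20*(|x|+2)) ≤ 1/(20*(|x * m|+2)) := by
      apply div_le_div_of_nonneg_left (by norm_num) (by positivity)
      nlinarith [hm1]
    have hZcase : Z = ZSt m x z := hZ_def
    unfold ZSt at hZcase
    split_ifs at hZcase with hc
    · -- Z = truncMeanAbove (-(x*m))
      have hk := key_above (-(x*m))
      rw [abs_neg] at hk
      have heq : Z + m * x = truncMeanAbove (-(x*m)) - (-(x*m)) := by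
        rw [hZcase]; ring
      rw [heq, abs_of_pos (lt_of_lt_of_le (by positivity) hk)]
      exact le_trans hmono hk
    · -- Z = truncMeanBelow (-(x*m)) = - truncMeanAbove (x*m)
      have hk := key_above (x*m)
      have heq : Z + m * x = -(truncMeanAbove (x*m) - (x*m)) := by
        rw [hZcase, below_eq, neg_neg]; ring
      rw [heq, abs_neg, abs_of_pos (lt_of_lt_of_le (by positivity) hk)]
      exact le_trans hmono hk
  -- combine
  have h20 : (0:ℝ) < 20*(|x|+2) := by positivity
  have hcomb : 1/(20*(|x|+2)) ≤ (u - l)/2 * |x| := le_trans step3 step2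
  rw [div_le_iff₀ h20] at hcomb
  nlinarith [hcomb, abs_nonneg x]

lemma tail_le (T : ℝ) (hT : 1 ≤ T) :
    (∫ x in Ioi T, stdPdf x) ≤ Real.exp (-T^2/2) / 2 := by
  have hb : ∀ x ∈ Ioi T, stdPdf x ≤ Real.exp (-T^2/2) / 2 * Real.exp (T - x) := by
    intro x hxm
    simp only [mem_Ioi] at hxm
    unfold stdPdf
    rw [div_le_iff₀ (by positivity), div_mul_eq_mul_div, div_mul_eq_mul_div,
      le_div_iff₀ (by norm_num : (0:ℝ) < 2)]
    have hexp : Real.exp (-x^2/2) * 2 ≤ Real.exp (-T^2/2) * Real.exp (T - x) * 2 := by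
      rw [← Real.exp_add]
      have : -x^2/2 ≤ -T^2/2 + (T - x) := by nlinarith
      nlinarith [Real.exp_le_exp.mpr this, Real.exp_pos (-x^2/2)]
    calc Real.exp (-x^2/2) * 2 ≤ Real.exp (-T^2/2) * Real.exp (T-x) * 2 := hexp
    _ ≤ Real.exp (-T^2/2) * Real.exp (T-x) * Real.sqrt (2*Real.pi) :=
        mul_le_mul_of_nonneg_left two_le_sqrt_two_pi (by positivity)
  have hintexp : IntegrableOn (fun x => Real.exp (T - x)) (Ioi T) := by
    have h1 := (exp_neg_integrableOn_Ioi T (by norm_num : (0:ℝ) < 1)).const_mul (Real.exp T)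
    refine IntegrableOn.congr_fun h1 (fun x _ => ?_) measurableSet_Ioi
    rw [← Real.exp_add]
    ring_nf
  have hint : IntegrableOn (fun x => Real.exp (-T^2/2) / 2 * Real.exp (T - x)) (Ioi T) :=
    hintexp.const_mul _
  have hval : ∫ x in Ioi T, Real.exp (T - x) = 1 := by
    simp_rw [sub_eq_add_neg, Real.exp_add]
    rw [MeasureTheory.integral_const_mul, integral_exp_neg_Ioi, ← Real.exp_add]
    simp
  calc (∫ x in Ioi T, stdPdf x)
      ≤ ∫ x in Ioi T, Real.exp (-T^2/2) / 2 * Real.exp (T - x) :=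
        setIntegral_mono_on integrable_stdPdf.integrableOn hint measurableSet_Ioi hb
    _ = Real.exp (-T^2/2) / 2 := by
        rw [MeasureTheory.integral_const_mul, hval, mul_one]

lemma gauss_tail (T : ℝ) (hT : 1 ≤ T) :
    stdNormal {x : ℝ | T ≤ |x|} ≤ ENNReal.ofReal (Real.exp (-T^2/2)) := by
  have hset : {x : ℝ | T ≤ |x|} = Iic (-T) ∪ Ici T := by
    ext x
    simp only [mem_setOf_eq, mem_union, mem_Iic, mem_Ici, le_abs, le_neg]
    tauto
  have hIic : (∫ x in Iic (-T), gaussianPDFReal 0 1 x) = ∫ x in Ioi T, stdPdf x := by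
    simp_rw [← stdPdf_eq]
    have h := integral_comp_neg_Ioi T stdPdf
    rw [← h]
    simp_rw [stdPdf_even]
  have hIci : (∫ x in Ici T, gaussianPDFReal 0 1 x) = ∫ x in Ioi T, stdPdf x := by
    simp_rw [← stdPdf_eq]
    exact integral_Ici_eq_integral_Ioi
  have htl := tail_le T hT
  calc stdNormal {x : ℝ | T ≤ |x|} = stdNormal (Iic (-T) ∪ Ici T) := by rw [hset]
    _ ≤ stdNormal (Iic (-T)) + stdNormal (Ici T) := measure_union_le _ _
    _ ≤ ENNReal.ofReal (Real.exp (-T^2/2)/2) + ENNReal.ofReal (Real.exp (-T^2/2)/2) := by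
        apply add_le_add
        · rw [show stdNormal = gaussianReal 0 1 from rfl,
            gaussianReal_apply_eq_integral 0 one_ne_zero, hIic]
          exact ENNReal.ofReal_le_ofReal htl
        · rw [show stdNormal = gaussianReal 0 1 from rfl,
            gaussianReal_apply_eq_integral 0 one_ne_zero, hIci]
          exact ENNReal.ofReal_le_ofReal htl
    _ = ENNReal.ofReal (Real.exp (-T^2/2)) := by
        rw [← ENNReal.ofReal_add (by positivity) (by positivity)]
        norm_num

lemma stdNormal_singleton_zero : stdNormal ({0} : Set ℝ) = 0 := by
  rw [show stdNormal = gaussianReal 0 1 from rfl,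
    gaussianReal_apply_eq_integral 0 one_ne_zero,
    Measure.restrict_eq_zero.mpr (measure_singleton 0), integral_zero_measure,
    ENNReal.ofReal_zero]

end AuxLemmas

/-- **Upper bound on the probability of a belief update under the straightforward
policy.** There is a universal constant `C_update > 0` such that whenever
`w = u - l ≤ C_update`, the probability (over independent standard normal `x`, `z`)
that the confidence interval is updated is at most `exp (-C_update / w)`. -/
theorem straightforward_update_probability_upper_bound :
    ∃ Cupdate : ℝ, 0 < Cupdate ∧
      ∀ θ l u : ℝ, -1 ≤ l → l ≤ θ → θ ≤ u → u ≤ 1 → u - l ≤ Cupdate →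
        stdNormal2 {p : ℝ × ℝ | updSt θ l u p.1 p.2 ≠ (l, u)} ≤
          ENNReal.ofReal (Real.exp (-Cupdate / (u - l))) := by
  refine ⟨1/250, by norm_num, fun θ l u hl hθ₁ hθ₂ hu hwle => ?_⟩
  rcases eq_or_lt_of_le (le_trans hθ₁ hθ₂) with heq | hlt
  · -- degenerate case l = u
    have hz : u - l = 0 := by rw [heq]; ring
    rw [hz, div_zero, Real.exp_zero, ENNReal.ofReal_one]
    exact prob_le_one
  · set w : ℝ := u - l with hw_def
    have hw0 : 0 < w := by simp [hw_def]; linarith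
    set a : ℝ := Real.sqrt (1/(10*w)) with ha_def
    have ha2 : a^2 = 1/(10*w) := Real.sq_sqrt (by positivity)
    have ha5 : 5 ≤ a := by
      rw [ha_def, Real.le_sqrt (by norm_num) (by positivity)]
      rw [le_div_iff₀ (by positivity)]
      nlinarith
    set T : ℝ := a - 1 with hT_def
    have hT1 : 1 ≤ T := by rw [hT_def]; linarith
    -- event inclusion
    have hsub : {p : ℝ × ℝ | updSt θ l u p.1 p.2 ≠ (l, u)} ⊆
        ((({0} : Set ℝ) ∪ {x : ℝ | T ≤ |x|}) ×ˢ (univ : Set ℝ)) := by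
      rintro ⟨x, z⟩ hp
      simp only [mem_setOf_eq] at hp
      refine ⟨?_, mem_univ _⟩
      by_cases hx : x = 0
      · exact Or.inl hx
      · right
        have hkey := update_imp θ l u x z hx hl hu hθ₁ hθ₂ hp
        rw [← hw_def] at hkey
        have hy : 1/(10*w) ≤ |x| * (|x| + 2) := by
          rw [div_le_iff₀ (by positivity)]
          nlinarith
        simp only [mem_setOf_eq, hT_def]
        by_contra hcon
        push_neg at hcon
        nlinarith [hy, ha2, abs_nonneg x]
    calc stdNormal2 {p : ℝ × ℝ | updSt θ l u p.1 p.2 ≠ (l, u)}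
        ≤ stdNormal2 ((({0} : Set ℝ) ∪ {x : ℝ | T ≤ |x|}) ×ˢ (univ : Set ℝ)) :=
          measure_mono hsub
      _ = stdNormal (({0} : Set ℝ) ∪ {x : ℝ | T ≤ |x|}) * stdNormal univ := by
          rw [show stdNormal2 = stdNormal.prod stdNormal from rfl, Measure.prod_prod]
      _ = stdNormal (({0} : Set ℝ) ∪ {x : ℝ | T ≤ |x|}) := by
          rw [measure_univ, mul_one]
      _ ≤ stdNormal ({0} : Set ℝ) + stdNormal {x : ℝ | T ≤ |x|} := measure_union_le _ _
      _ = stdNormal {x : ℝ | T ≤ |x|} := by rw [stdNormal_singleton_zero, zero_add]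
      _ ≤ ENNReal.ofReal (Real.exp (-T^2/2)) := gauss_tail T hT1
      _ ≤ ENNReal.ofReal (Real.exp (-(1/250) / w)) := by
          apply ENNReal.ofReal_le_ofReal
          apply Real.exp_le_exp.mpr
          rw [neg_div, neg_div, neg_le_neg_iff, div_le_iff₀ hw0]
          have hT2 : a^2/2 - 1 ≤ T^2 := by nlinarith [sq_nonneg (a-2)]
          have ha2' : a^2 * (10*w) = 1 := by rw [ha2]; field_simp
          nlinarith [hT2, ha2', hw0, hwle]
end
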